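/- (Oblique Subspace Pursuit, Step 1.) Let Ψ, Ψ̃ ∈ K^{m×n}, let x* ∈ K^n be s-sparse with support J*, let z ∈ K^m and y = Ψx* + z. Let J ⊆ {1,…,n} with 1 ≤ |J| ≤ 2s, assume θ := θ_{3s}(Ψ̃*Ψ) < 1, and set δ̃ := δ_{2s}(Ψ̃). Let x₁ be the (unique) vector supported on J with Ψ̃_J*(y − Ψx₁) = 0 (well defined since Ψ̃_J*Ψ_J is invertible). Then ‖x₁ − x*‖₂ ≤ (1/√(1−θ²))·‖Π_{J*\J}x*‖₂ + (√(1+δ̃)/(1−θ))·‖z‖₂. -/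

import Mathlib

/-!
Write `u = x₁ − x*` and split it as `u = Π_J u + Π_{Jᶜ} u`. Off `J` we have `x₁ = 0`, so
`Π_{Jᶜ} u = −Π_{J*∖J} x*`. On `J`, the oblique orthogonality condition gives
`⟨Π_J u, Ψ̃*Ψ u⟩ = ⟨Ψ̃ Π_J u, z⟩`; since `u` is `3s`-sparse, comparing with
`⟨Π_J u, u⟩ = ‖Π_J u‖²` through `θ` yields `‖Π_J u‖ ≤ θ‖u‖ + √(1+δ̃)‖z‖`. Pythagoras then gives
`‖u‖² ≤ (θ‖u‖ + √(1+δ̃)‖z‖)² + ‖Π_{J*∖J} x*‖²`, a quadratic inequality in `‖u‖` whose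
solution is the bound.
-/

open scoped BigOperators
open Matrix MeasureTheory

noncomputable section

namespace ObliquePursuit

variable {𝕜 : Type*} [RCLike 𝕜]

/-- The Euclidean (`ℓ²`) norm of a finitely indexed vector. -/
def l2 {ι : Type*} [Fintype ι] (x : ι → 𝕜) : ℝ :=
  Real.sqrt (∑ i, ‖x i‖ ^ 2)

/-- The spectral (`ℓ² → ℓ²` operator) norm of a matrix. -/
def specNorm {ι κ : Type*} [Fintype ι] [Fintype κ] [DecidableEq κ]
    (M : Matrix ι κ 𝕜) : ℝ :=
  ‖LinearMap.toContinuousLinearMap (Matrix.toEuclideanLin M)‖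

/-- `x` is `s`-sparse: it has at most `s` nonzero entries. -/
def Sparse {ι : Type*} (s : ℕ) (x : ι → 𝕜) : Prop :=
  ∃ J : Finset ι, J.card ≤ s ∧ ∀ i, x i ≠ 0 → i ∈ J

/-- The `s`-restricted biorthogonality constant `θ_s(M)`: the smallest `δ ≥ 0` such that
`|⟨y, Mx⟩ − ⟨y, x⟩| ≤ δ‖x‖₂‖y‖₂` for all `x, y` supported on a common index set of
cardinality at most `s`. -/
def theta {ι : Type*} [Fintype ι] (s : ℕ) (M : Matrix ι ι 𝕜) : ℝ :=
  sInf {δ : ℝ | 0 ≤ δ ∧ ∀ J : Finset ι, J.card ≤ s →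
    ∀ x y : ι → 𝕜, (∀ i, x i ≠ 0 → i ∈ J) → (∀ i, y i ≠ 0 → i ∈ J) →
      ‖star y ⬝ᵥ M.mulVec x - star y ⬝ᵥ x‖ ≤ δ * l2 x * l2 y}

/-- The `s`-restricted isometry constant `δ_s(Ψ)`. -/
def ric {ι κ : Type*} [Fintype ι] [Fintype κ] (s : ℕ) (Ψ : Matrix ι κ 𝕜) : ℝ :=
  sInf {δ : ℝ | 0 ≤ δ ∧ ∀ x : κ → 𝕜, Sparse s x →
    (1 - δ) * l2 x ^ 2 ≤ l2 (Ψ.mulVec x) ^ 2 ∧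
      l2 (Ψ.mulVec x) ^ 2 ≤ (1 + δ) * l2 x ^ 2}

/-- Coordinate projection `Π_J`: keep the entries indexed by `J`, zero out the others. -/
def proj {ι : Type*} [DecidableEq ι] (J : Finset ι) (x : ι → 𝕜) : ι → 𝕜 :=
  fun i => if i ∈ J then x i else 0

/-- The column submatrix `Ψ_J` of `Ψ` formed by the columns indexed by `J`. -/
def cols {ι κ : Type*} (Ψ : Matrix ι κ 𝕜) (J : Finset κ) :
    Matrix ι {j // j ∈ J} 𝕜 :=
  Ψ.submatrix id fun j => (j : κ)

/-- The `j`-th column of `Ψ`. -/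
def col {ι κ : Type*} (Ψ : Matrix ι κ 𝕜) (j : κ) : ι → 𝕜 :=
  fun i => Ψ i j

/-- The complementary oblique projector `E = I − Ψ_J (Ψ̃_J^* Ψ_J)⁻¹ Ψ̃_J^*`
(equal to `I` when `J = ∅`). -/
def obliqueE {ι κ : Type*} [Fintype ι] [DecidableEq ι] [DecidableEq κ]
    (Ψ Ψt : Matrix ι κ 𝕜) (J : Finset κ) : Matrix ι ι 𝕜 :=
  1 - cols Ψ J * ((cols Ψt J)ᴴ * cols Ψ J)⁻¹ * (cols Ψt J)ᴴ

/-- The smallest (real) eigenvalue of a matrix. -/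
def lamMin {ι : Type*} [Fintype ι] (G : Matrix ι ι 𝕜) : ℝ :=
  sInf {r : ℝ | ∃ v : ι → 𝕜, v ≠ 0 ∧ G.mulVec v = (r : 𝕜) • v}

/-- The `j`-th largest singular value (1-indexed) of a matrix, characterized via the
Eckart–Young–Mirsky theorem: `σ_j(A) = min { ‖A − B‖ : rank B < j }` where `‖·‖` is the
spectral norm. -/
def singVal {ι κ : Type*} [Fintype ι] [Fintype κ] [DecidableEq κ]
    (A : Matrix ι κ 𝕜) (j : ℕ) : ℝ :=
  sInf {r : ℝ | ∃ B : Matrix ι κ 𝕜, B.rank < j ∧ r = specNorm (A - B)}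
section L2

variable {ι : Type*} [Fintype ι]

lemma l2_eq_norm (x : ι → 𝕜) : l2 x = ‖WithLp.toLp 2 x‖ := by
  rw [EuclideanSpace.norm_eq]; rfl

lemma l2_nonneg (x : ι → 𝕜) : 0 ≤ l2 x := Real.sqrt_nonneg _

lemma l2_sq (x : ι → 𝕜) : l2 x ^ 2 = ∑ i, ‖x i‖ ^ 2 :=
  Real.sq_sqrt (Finset.sum_nonneg fun _ _ => sq_nonneg _)

lemma l2_neg (x : ι → 𝕜) : l2 (-x) = l2 x := by simp [l2]

lemma norm_star_dotProduct_le (x y : ι → 𝕜) : ‖star x ⬝ᵥ y‖ ≤ l2 x * l2 y := by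
  rw [dotProduct_comm, ← EuclideanSpace.inner_toLp_toLp, l2_eq_norm, l2_eq_norm]
  exact norm_inner_le_norm _ _

lemma star_dotProduct_self (x : ι → 𝕜) : star x ⬝ᵥ x = ((l2 x ^ 2 : ℝ) : 𝕜) := by
  rw [l2_sq]
  push_cast
  simp [dotProduct, RCLike.conj_mul]

lemma l2_mulVec_le_specNorm {κ : Type*} [Fintype κ] [DecidableEq ι] (M : Matrix κ ι 𝕜)
    (x : ι → 𝕜) : l2 (M *ᵥ x) ≤ specNorm M * l2 x := by
  rw [l2_eq_norm, l2_eq_norm, specNorm]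
  simpa using (LinearMap.toContinuousLinearMap (toEuclideanLin M)).le_opNorm (WithLp.toLp 2 x)

end L2

section Proj

variable {ι : Type*} [Fintype ι] [DecidableEq ι]

lemma l2_sq_eq_proj_add_proj_compl (J : Finset ι) (x : ι → 𝕜) :
    l2 x ^ 2 = l2 (proj J x) ^ 2 + l2 (proj Jᶜ x) ^ 2 := by
  simp only [l2_sq, ← Finset.sum_add_distrib]
  refine Finset.sum_congr rfl fun i _ => ?_
  by_cases h : i ∈ J <;> simp [proj, h]

lemma star_proj_dotProduct (J : Finset ι) (x : ι → 𝕜) :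
    star (proj J x) ⬝ᵥ x = ((l2 (proj J x) ^ 2 : ℝ) : 𝕜) := by
  rw [← star_dotProduct_self]
  refine Finset.sum_congr rfl fun i _ => ?_
  by_cases h : i ∈ J <;> simp [proj, h]

lemma proj_compl_sub {J K : Finset ι} {x x' : ι → 𝕜} (hx : ∀ i, x i ≠ 0 → i ∈ J)
    (hx' : ∀ i, x' i ≠ 0 → i ∈ K) : proj Jᶜ (x - x') = -proj (K \ J) x' := by
  funext i
  by_cases hJ : i ∈ J
  · simp [proj, hJ]
  have hxi : x i = 0 := by_contra fun h => hJ (hx i h)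
  by_cases hK : i ∈ K
  · simp [proj, hJ, hK, hxi]
  have hx'i : x' i = 0 := by_contra fun h => hK (hx' i h)
  simp [proj, hJ, hK, hxi, hx'i]

end Proj

section RestrictedConstants

variable {ι κ : Type*} [Fintype ι] [Fintype κ]

lemma theta_mem (s : ℕ) (M : Matrix ι ι 𝕜) :
    theta s M ∈ {δ : ℝ | 0 ≤ δ ∧ ∀ J : Finset ι, J.card ≤ s →
      ∀ x y : ι → 𝕜, (∀ i, x i ≠ 0 → i ∈ J) → (∀ i, y i ≠ 0 → i ∈ J) →
        ‖star y ⬝ᵥ M *ᵥ x - star y ⬝ᵥ x‖ ≤ δ * l2 x * l2 y} := by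
  classical
  refine IsClosed.csInf_mem ?_ ?_ ⟨0, fun _ h => h.1⟩
  · simp only [Set.ofPred_and, Set.ofPred_forall]
    exact isClosed_Ici.inter <| isClosed_iInter fun _ => isClosed_iInter fun _ =>
      isClosed_iInter fun x => isClosed_iInter fun y => isClosed_iInter fun _ =>
        isClosed_iInter fun _ => isClosed_le continuous_const (by fun_prop)
  · refine ⟨specNorm (M - 1), norm_nonneg _, fun _ _ x y _ _ => ?_⟩
    rw [← dotProduct_sub, show M *ᵥ x - x = (M - 1) *ᵥ x by rw [sub_mulVec, one_mulVec]]
    calc ‖star y ⬝ᵥ (M - 1) *ᵥ x‖ ≤ l2 y * l2 ((M - 1) *ᵥ x) := norm_star_dotProduct_le _ _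
      _ ≤ l2 y * (specNorm (M - 1) * l2 x) :=
        mul_le_mul_of_nonneg_left (l2_mulVec_le_specNorm _ _) (l2_nonneg _)
      _ = specNorm (M - 1) * l2 x * l2 y := by ring

lemma theta_nonneg (s : ℕ) (M : Matrix ι ι 𝕜) : 0 ≤ theta s M := (theta_mem s M).1

lemma norm_star_dotProduct_mulVec_sub_le_theta {s : ℕ} (M : Matrix ι ι 𝕜) {J : Finset ι}
    (hJ : J.card ≤ s) {x y : ι → 𝕜} (hx : ∀ i, x i ≠ 0 → i ∈ J) (hy : ∀ i, y i ≠ 0 → i ∈ J) :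
    ‖star y ⬝ᵥ M *ᵥ x - star y ⬝ᵥ x‖ ≤ theta s M * l2 x * l2 y :=
  (theta_mem s M).2 J hJ x y hx hy

lemma ric_mem (s : ℕ) (Ψ : Matrix ι κ 𝕜) :
    ric s Ψ ∈ {δ : ℝ | 0 ≤ δ ∧ ∀ x : κ → 𝕜, Sparse s x →
      (1 - δ) * l2 x ^ 2 ≤ l2 (Ψ *ᵥ x) ^ 2 ∧ l2 (Ψ *ᵥ x) ^ 2 ≤ (1 + δ) * l2 x ^ 2} := by
  classical
  refine IsClosed.csInf_mem ?_ ?_ ⟨0, fun _ h => h.1⟩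
  · simp only [Set.ofPred_and, Set.ofPred_forall]
    exact isClosed_Ici.inter <| isClosed_iInter fun x => isClosed_iInter fun _ =>
      (isClosed_le (by fun_prop) continuous_const).inter
        (isClosed_le continuous_const (by fun_prop))
  · refine ⟨1 + specNorm Ψ ^ 2, by positivity, fun x _ => ⟨?_, ?_⟩⟩
    · nlinarith [sq_nonneg (l2 (Ψ *ᵥ x)), sq_nonneg (specNorm Ψ * l2 x)]
    · have h := pow_le_pow_left₀ (l2_nonneg _) (l2_mulVec_le_specNorm Ψ x) 2
      nlinarith [sq_nonneg (l2 x)]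

lemma l2_mulVec_le_sqrt_one_add_ric {s : ℕ} (Ψ : Matrix ι κ 𝕜) {x : κ → 𝕜}
    (hx : Sparse s x) : l2 (Ψ *ᵥ x) ≤ √(1 + ric s Ψ) * l2 x := by
  rw [← Real.sqrt_sq (l2_nonneg (Ψ *ᵥ x)), ← Real.sqrt_sq (l2_nonneg x), ← Real.sqrt_mul]
  · exact Real.sqrt_le_sqrt ((ric_mem s Ψ).2 x hx).2
  · linarith [(ric_mem s Ψ).1]

end RestrictedConstants

section ObliqueStep

variable {ι κ : Type*} [Fintype ι] [Fintype κ]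

lemma star_mulVec_dotProduct_eq_zero (Ψt : Matrix ι κ 𝕜) {J : Finset κ} {r : ι → 𝕜}
    (horth : ∀ j ∈ J, star (col Ψt j) ⬝ᵥ r = 0) {v : κ → 𝕜} (hv : ∀ i, v i ≠ 0 → i ∈ J) :
    star (Ψt *ᵥ v) ⬝ᵥ r = 0 := by
  rw [star_mulVec, ← dotProduct_mulVec]
  refine Finset.sum_eq_zero fun j _ => ?_
  by_cases hj : v j = 0
  · simp [hj]
  · have h := horth j (hv j hj)
    simp only [dotProduct, col, Pi.star_apply, RCLike.star_def] at h
    simp [mulVec, dotProduct, conjTranspose_apply, h]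

lemma l2_proj_le_theta_add [DecidableEq κ] (Ψ Ψt : Matrix ι κ 𝕜) {J K : Finset κ}
    (hJK : J ⊆ K) {r t : ℕ} (hJ : J.card ≤ r) (hK : K.card ≤ t) {u : κ → 𝕜}
    (hu : ∀ i, u i ≠ 0 → i ∈ K) (z : ι → 𝕜)
    (horth : ∀ j ∈ J, star (col Ψt j) ⬝ᵥ (z - Ψ *ᵥ u) = 0) :
    l2 (proj J u) ≤ theta t (Ψtᴴ * Ψ) * l2 u + √(1 + ric r Ψt) * l2 z := by
  set v := proj J u
  have hv : ∀ i, v i ≠ 0 → i ∈ J := fun i hi => by_contra fun h => hi (if_neg h)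
  have hsplit : star v ⬝ᵥ u =
      -(star v ⬝ᵥ (Ψtᴴ * Ψ) *ᵥ u - star v ⬝ᵥ u) + star (Ψt *ᵥ v) ⬝ᵥ z := by
    have hadj : star (Ψt *ᵥ v) ⬝ᵥ Ψ *ᵥ u = star v ⬝ᵥ (Ψtᴴ * Ψ) *ᵥ u := by
      rw [star_mulVec, ← dotProduct_mulVec, mulVec_mulVec]
    have h0 := star_mulVec_dotProduct_eq_zero Ψt horth hv
    rw [dotProduct_sub, hadj] at h0
    linear_combination -h0
  have hcross := norm_star_dotProduct_mulVec_sub_le_theta (Ψtᴴ * Ψ) hK hu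
    (fun i hi => hJK (hv i hi))
  have hz : l2 (Ψt *ᵥ v) ≤ √(1 + ric r Ψt) * l2 v :=
    l2_mulVec_le_sqrt_one_add_ric Ψt ⟨J, hJ, hv⟩
  have hsq : l2 v ^ 2 ≤ l2 v * (theta t (Ψtᴴ * Ψ) * l2 u + √(1 + ric r Ψt) * l2 z) := by
    calc l2 v ^ 2 = ‖star v ⬝ᵥ u‖ := by
          rw [star_proj_dotProduct, RCLike.norm_ofReal, abs_of_nonneg (sq_nonneg _)]
      _ ≤ theta t (Ψtᴴ * Ψ) * l2 u * l2 v + l2 (Ψt *ᵥ v) * l2 z := by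
          rw [hsplit]
          exact (norm_add_le _ _).trans
            (add_le_add (by rw [norm_neg]; exact hcross) (norm_star_dotProduct_le _ _))
      _ ≤ theta t (Ψtᴴ * Ψ) * l2 u * l2 v + √(1 + ric r Ψt) * l2 v * l2 z := by
          gcongr
          exact l2_nonneg z
      _ = l2 v * (theta t (Ψtᴴ * Ψ) * l2 u + √(1 + ric r Ψt) * l2 z) := by ring
  have hrhs : 0 ≤ theta t (Ψtᴴ * Ψ) * l2 u + √(1 + ric r Ψt) * l2 z :=
    add_nonneg (mul_nonneg (theta_nonneg _ _) (l2_nonneg u))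
      (mul_nonneg (Real.sqrt_nonneg _) (l2_nonneg z))
  nlinarith [l2_nonneg v]

end ObliqueStep

lemma le_div_sqrt_add_div_of_sq_le {θ a b c : ℝ} (hθ0 : 0 ≤ θ) (hθ1 : θ < 1) (hb : 0 ≤ b)
    (hc : 0 ≤ c) (h : a ^ 2 ≤ (θ * a + c) ^ 2 + b ^ 2) :
    a ≤ 1 / √(1 - θ ^ 2) * b + c / (1 - θ) := by
  have h1θ : 0 < 1 - θ := by linarith
  have ht : 0 < √(1 - θ ^ 2) := Real.sqrt_pos.2 (by nlinarith)
  obtain ⟨d, hd0, rfl⟩ : ∃ d, 0 ≤ d ∧ c = (1 - θ) * d :=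
    ⟨c / (1 - θ), by positivity, (mul_div_cancel₀ c h1θ.ne').symm⟩
  rw [mul_div_cancel_left₀ d h1θ.ne', one_div_mul_eq_div, ← sub_le_iff_le_add,
    le_div_iff₀' ht]
  rcases le_or_gt a d with had | had
  · nlinarith
  -- `a² − (θa + (1 − θ)d)² = (1 − θ²)(a − d)² + 2(1 − θ)d(a − d)`
  have hquad : (√(1 - θ ^ 2) * (a - d)) ^ 2 ≤ b ^ 2 := by
    rw [mul_pow, Real.sq_sqrt (by nlinarith)]
    nlinarith [mul_nonneg (mul_nonneg h1θ.le hd0) (sub_pos.2 had).le]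
  exact abs_le_of_sq_le_sq' hquad hb |>.2

theorem statement10_general (m n s : ℕ) (Ψ Ψt : Matrix (Fin m) (Fin n) 𝕜)
    (xstar : Fin n → 𝕜) (Jstar : Finset (Fin n))
    (hsupp : ∀ i, xstar i ≠ 0 ↔ i ∈ Jstar) (hcard : Jstar.card ≤ s)
    (z y : Fin m → 𝕜) (hy : y = Ψ.mulVec xstar + z)
    (J : Finset (Fin n)) (hJ2 : J.card ≤ 2 * s)
    (θ : ℝ) (hθdef : θ = theta (3 * s) (Ψtᴴ * Ψ)) (hθ : θ < 1)
    (x₁ : Fin n → 𝕜) (hsupp1 : ∀ i, x₁ i ≠ 0 → i ∈ J)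
    (horth : ∀ j ∈ J, star (col Ψt j) ⬝ᵥ (y - Ψ.mulVec x₁) = 0) :
    l2 (x₁ - xstar) ≤
      1 / Real.sqrt (1 - θ ^ 2) * l2 (proj (Jstar \ J) xstar) +
        Real.sqrt (1 + ric (2 * s) Ψt) / (1 - θ) * l2 z := by
  classical
  set u := x₁ - xstar
  have hu : ∀ i, u i ≠ 0 → i ∈ J ∪ Jstar := fun i hi => by
    by_contra h
    simp only [Finset.mem_union, not_or] at h
    have hx₁ : x₁ i = 0 := by_contra fun hne => h.1 (hsupp1 i hne)
    have hxstar : xstar i = 0 := by_contra fun hne => h.2 ((hsupp i).1 hne)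
    exact hi (by simp [u, hx₁, hxstar])
  have hres : y - Ψ *ᵥ x₁ = z - Ψ *ᵥ u := by
    rw [hy, mulVec_sub]; abel
  have hJ : l2 (proj J u) ≤ θ * l2 u + √(1 + ric (2 * s) Ψt) * l2 z := by
    rw [hθdef]
    exact l2_proj_le_theta_add Ψ Ψt Finset.subset_union_left hJ2
      ((Finset.card_union_le _ _).trans (by omega)) hu z (hres ▸ horth)
  have hJc : proj Jᶜ u = -proj (Jstar \ J) xstar :=
    proj_compl_sub hsupp1 fun i => (hsupp i).1
  rw [div_mul_eq_mul_div _ (1 - θ) (l2 z)]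
  refine le_div_sqrt_add_div_of_sq_le (hθdef ▸ theta_nonneg _ _) hθ
    (l2_nonneg (proj (Jstar \ J) xstar)) (mul_nonneg (Real.sqrt_nonneg _) (l2_nonneg z)) ?_
  calc l2 u ^ 2 = l2 (proj J u) ^ 2 + l2 (proj (Jstar \ J) xstar) ^ 2 := by
        rw [l2_sq_eq_proj_add_proj_compl J u, hJc, l2_neg]
    _ ≤ _ := by gcongr; exact l2_nonneg _

/-- Oblique Subspace Pursuit, Step 1. -/
theorem statement10 (m n s : ℕ) (Ψ Ψt : Matrix (Fin m) (Fin n) 𝕜)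
    (xstar : Fin n → 𝕜) (Jstar : Finset (Fin n))
    (hsupp : ∀ i, xstar i ≠ 0 ↔ i ∈ Jstar) (hcard : Jstar.card ≤ s)
    (z y : Fin m → 𝕜) (hy : y = Ψ.mulVec xstar + z)
    (J : Finset (Fin n)) (hJ1 : 1 ≤ J.card) (hJ2 : J.card ≤ 2 * s)
    (θ : ℝ) (hθdef : θ = theta (3 * s) (Ψtᴴ * Ψ)) (hθ : θ < 1)
    (x₁ : Fin n → 𝕜) (hsupp1 : ∀ i, x₁ i ≠ 0 → i ∈ J)
    (horth : ∀ j ∈ J, star (col Ψt j) ⬝ᵥ (y - Ψ.mulVec x₁) = 0) :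
    l2 (x₁ - xstar) ≤
      1 / Real.sqrt (1 - θ ^ 2) * l2 (proj (Jstar \ J) xstar) +
        Real.sqrt (1 + ric (2 * s) Ψt) / (1 - θ) * l2 z :=
  statement10_general m n s Ψ Ψt xstar Jstar hsupp hcard z y hy J hJ2 θ hθdef hθ x₁ hsupp1 horth

end ObliquePursuit
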